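/- arXiv:1403.4167 — 5 statements merged into one kernel-verified Lean document; each statement's English description precedes it below -/
import Mathlib

section
/- Let S ⊆ ℕ be a numerical semigroup with conductor β and Frobenius number γ = β − 1, let α := min(S \ {0}), and let K° := { a ∈ ℤ : 0 ≤ a < β and γ − a ∉ S }. Assume S is not symmetric (i.e., K° ⊄ S) and α < β. Then every integer a with β ≤ a < 2β − α can be written as a sum a = k₁ + k₂ with k₁, k₂ ∈ K°. -/
/-!
The elements of `K°` are exactly `γ - x` for the gaps `x` of `S`, so `a = k₁ + k₂` amounts to
writing `s = 2γ - a ∈ [α - 1, γ - 1]` as a sum of two gaps. Non-symmetry forces `α ≥ 3`, so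
below `2α - 1` both halves of `s` lie in `(0, α)`. Above it, a gap `g ∈ (s - α, s)` pairs with
the gap `s - g ∈ (0, α)`; if there is none, the `α - 1` consecutive elements of `(s - α, s)`
force every gap beyond `s - α` to be congruent to `s` mod `α`. Then `γ ≡ s`, so `s` is a gap,
and a pair of gaps `c, γ - c` witnessing non-symmetry cannot both lie beyond `s - α` (else
`s ≡ 0`); the one below gives `s = c + (s - c)` with `s - c` a gap because
`(s - c) + (γ - s) = γ - c`.
-/

section Gaps

variable {M : AddSubmonoid ℤ}

variable (M) in
def IsGap (x : ℤ) : Prop := 0 ≤ x ∧ x ∉ M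

theorem mem_of_dvd {α n : ℤ} (hα : α ∈ M) (hαpos : 0 < α) (hn : 0 ≤ n) (hdvd : α ∣ n) :
    n ∈ M := by
  obtain ⟨k, rfl⟩ := hdvd
  lift k to ℕ using nonneg_of_mul_nonneg_right hn hαpos
  simpa [mul_comm] using M.nsmul_mem hα k

theorem isGap_of_lt_multiplicity {α n : ℤ} (hmin : ∀ x ∈ M, x ≠ 0 → α ≤ x) (hn : 0 < n)
    (hnα : n < α) : IsGap M n :=
  ⟨hn.le, fun h => (hmin n h hn.ne').not_gt hnα⟩

theorem three_le_of_isGap_of_isGap_sub {α γ c : ℤ} (hα : α ∈ M) (hαpos : 0 < α)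
    (hγ : IsGap M γ) (hc : IsGap M c) (hγc : IsGap M (γ - c)) : 3 ≤ α := by
  by_contra! hα3
  obtain rfl | rfl : α = 1 ∨ α = 2 := by omega
  · exact hγ.2 (mem_of_dvd hα one_pos hγ.1 (one_dvd γ))
  · have hc2 : ¬ 2 ∣ c := fun h => hc.2 (mem_of_dvd hα two_pos hc.1 h)
    have hγc2 : ¬ 2 ∣ γ - c := fun h => hγc.2 (mem_of_dvd hα two_pos hγc.1 h)
    exact hγ.2 (mem_of_dvd hα two_pos hγ.1 (by omega))

theorem dvd_sub_of_forall_mem_Ioo {α s n : ℤ} (hα : α ∈ M) (hαpos : 0 < α)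
    (hrun : ∀ g, s - α < g → g < s → g ∈ M) (hn : s - α < n) (hnM : n ∉ M) : α ∣ n - s := by
  by_contra hdvd
  have hdiv := Int.emod_add_mul_ediv (n - s) α
  set r := (n - s) % α
  set q := (n - s) / α
  have hr0 : 0 < r := lt_of_le_of_ne (Int.emod_nonneg _ hαpos.ne')
    (fun h => hdvd (Int.dvd_of_emod_eq_zero h.symm))
  have hrα : r < α := Int.emod_lt_of_pos _ hαpos
  have hq : 0 ≤ q + 1 := by nlinarith
  apply hnM
  have hsplit : n = (s + r - α) + α * (q + 1) := by linear_combination -hdiv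
  rw [hsplit]
  exact M.add_mem (hrun _ (by omega) (by omega))
    (mem_of_dvd hα hαpos (mul_nonneg hαpos.le hq) (dvd_mul_right α _))

theorem exists_isGap_add_isGap_of_forall_mem_Ioo {α γ c s : ℤ} (hα : α ∈ M) (hαpos : 0 < α)
    (hγ : γ ∉ M) (hc : IsGap M c) (hγc : IsGap M (γ - c)) (hs0 : 0 ≤ s) (hsγ : s < γ)
    (hrun : ∀ g, s - α < g → g < s → g ∈ M) :
    ∃ x y, IsGap M x ∧ IsGap M y ∧ x + y = s := by
  have hγs : α ∣ γ - s := dvd_sub_of_forall_mem_Ioo hα hαpos hrun (by omega) hγ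
  have hγsM : γ - s ∈ M := mem_of_dvd hα hαpos (by omega) hγs
  have hsplit_below : ∀ d, IsGap M d → γ - d ∉ M → d ≤ s - α →
      ∃ x y, IsGap M x ∧ IsGap M y ∧ x + y = s := by
    intro d hd hγd hds
    refine ⟨d, s - d, hd, ⟨by omega, fun h => hγd ?_⟩, by ring⟩
    simpa using M.add_mem h hγsM
  by_cases hcs : c ≤ s - α
  · exact hsplit_below c hc hγc.2 hcs
  by_cases hγcs : γ - c ≤ s - α
  · exact hsplit_below (γ - c) hγc (by simpa using hc.2) hγcs
  exfalso
  have hcs' := dvd_sub_of_forall_mem_Ioo hα hαpos hrun (by omega) hc.2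
  have hγcs' := dvd_sub_of_forall_mem_Ioo hα hαpos hrun (by omega) hγc.2
  have hαs : α ∣ s := by
    have h := (hγs.sub hcs').sub hγcs'
    rwa [show γ - s - (c - s) - (γ - c - s) = s by ring] at h
  have hsM : s ∈ M := mem_of_dvd hα hαpos hs0 hαs
  exact hγ (by simpa using M.add_mem hsM hγsM)

theorem exists_isGap_add_isGap {α γ c s : ℤ} (hα : α ∈ M) (hαpos : 0 < α)
    (hmin : ∀ x ∈ M, x ≠ 0 → α ≤ x) (hγ : IsGap M γ) (hc : IsGap M c) (hγc : IsGap M (γ - c))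
    (hαs : α - 1 ≤ s) (hsγ : s < γ) :
    ∃ x y, IsGap M x ∧ IsGap M y ∧ x + y = s := by
  have hα3 := three_le_of_isGap_of_isGap_sub hα hαpos hγ hc hγc
  rcases le_or_gt s (2 * α - 2) with hsmall | hlarge
  · exact ⟨s - s / 2, s / 2, isGap_of_lt_multiplicity hmin (by omega) (by omega),
      isGap_of_lt_multiplicity hmin (by omega) (by omega), by omega⟩
  by_cases hrun : ∀ g, s - α < g → g < s → g ∈ M
  · exact exists_isGap_add_isGap_of_forall_mem_Ioo hα hαpos hγ.2 hc hγc (by omega) hsγ hrun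
  push Not at hrun
  obtain ⟨g, hg_lo, hg_hi, hgM⟩ := hrun
  exact ⟨g, s - g, ⟨by omega, hgM⟩, isGap_of_lt_multiplicity hmin (by omega) (by omega),
    by ring⟩

end Gaps

theorem stmt2_general (S : Set ℤ)
    (hnneg : ∀ a ∈ S, 0 ≤ a)
    (h0 : (0 : ℤ) ∈ S)
    (hadd : ∀ a ∈ S, ∀ b ∈ S, a + b ∈ S)
    (β : ℤ)
    (hβ : (∀ n : ℤ, β ≤ n → n ∈ S) ∧ ∀ b : ℤ, (∀ n : ℤ, b ≤ n → n ∈ S) → β ≤ b)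
    (α : ℤ) (hα : α ∈ S ∧ α ≠ 0 ∧ ∀ x ∈ S, x ≠ 0 → α ≤ x)
    (Kc : Set ℤ) (hKc : Kc = {a : ℤ | 0 ≤ a ∧ a < β ∧ β - 1 - a ∉ S})
    (hnotsym : ¬ Kc ⊆ S) :
    ∀ a : ℤ, β ≤ a → a < 2 * β - α → ∃ k₁ ∈ Kc, ∃ k₂ ∈ Kc, a = k₁ + k₂ := by
  obtain ⟨hαS, hα0, hαmin⟩ := hα
  let M : AddSubmonoid ℤ :=
    { carrier := S, add_mem' := fun ha hb => hadd _ ha _ hb, zero_mem' := h0 }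
  have hαpos : 0 < α := lt_of_le_of_ne (hnneg α hαS) hα0.symm
  have hγ : β - 1 ∉ S := fun h => by
    have := hβ.2 (β - 1) fun n hn => by
      rcases hn.eq_or_lt with rfl | hlt
      exacts [h, hβ.1 n (by omega)]
    omega
  subst hKc
  obtain ⟨c, ⟨hc0, hcβ, hγc⟩, hcS⟩ := Set.not_subset.mp hnotsym
  intro a ha hab
  obtain ⟨x, y, ⟨hx0, hxS⟩, ⟨hy0, hyS⟩, hxy⟩ :=
    exists_isGap_add_isGap (M := M) (s := 2 * (β - 1) - a) hαS hαpos hαmin ⟨by omega, hγ⟩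
      ⟨hc0, hcS⟩ ⟨by omega, hγc⟩ (by omega) (by omega)
  refine ⟨β - 1 - x, ⟨by omega, by omega, ?_⟩, β - 1 - y, ⟨by omega, by omega, ?_⟩, by omega⟩
  · rwa [sub_sub_cancel]
  · rwa [sub_sub_cancel]

/-- Every integer in `[β, 2β - α)` is a sum of two elements of `K°`,
for a non-symmetric numerical semigroup `S` with conductor `β` and
multiplicity `α = min (S \ {0}) < β`. -/
theorem stmt2 (S : Set ℤ)
    (hnneg : ∀ a ∈ S, 0 ≤ a)
    (h0 : (0 : ℤ) ∈ S)
    (hadd : ∀ a ∈ S, ∀ b ∈ S, a + b ∈ S)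
    (β : ℤ)
    (hβ : (∀ n : ℤ, β ≤ n → n ∈ S) ∧ ∀ b : ℤ, (∀ n : ℤ, b ≤ n → n ∈ S) → β ≤ b)
    (α : ℤ) (hα : α ∈ S ∧ α ≠ 0 ∧ ∀ x ∈ S, x ≠ 0 → α ≤ x)
    (Kc : Set ℤ) (hKc : Kc = {a : ℤ | 0 ≤ a ∧ a < β ∧ β - 1 - a ∉ S})
    (hnotsym : ¬ Kc ⊆ S)
    (hαβ : α < β) :
    ∀ a : ℤ, β ≤ a → a < 2 * β - α → ∃ k₁ ∈ Kc, ∃ k₂ ∈ Kc, a = k₁ + k₂ :=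
  stmt2_general S hnneg h0 hadd β hβ α hα Kc hKc hnotsym
end

section
/- Let S ⊆ ℕ^s be a value semigroup with conductor β, Frobenius vector γ = β − (1,…,1), and α := min(S \ {0}) (which exists by the minimum-closure axiom). Let K := { a ∈ ℤ^s : Δ^S(γ − a) = ∅ } where Δ^S(a) := { b ∈ S : b_i = a_i for some i, b_j > a_j for j ≠ i }. Then for every v ∈ ℕ^s with 0 ≤ v ≤ α such that v ≠ α − e_i for every standard basis vector e_i, the element β − α + v belongs to K. -/
/-! An element of `Δ(γ - (β - α + v)) = Δ(α - v - 1)` has a coordinate smaller than the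
corresponding coordinate of `α`, so by minimality of `α` it is `0`; and `0 ∈ Δ(α - v - 1)`
forces `v = α - eᵢ`. -/

section

variable {ι : Type*}

theorem eq_zero_of_apply_lt_of_forall_ne_zero_le {S : Set (ι → ℤ)} {α b : ι → ℤ}
    (hα : ∀ x ∈ S, x ≠ 0 → α ≤ x) (hb : b ∈ S) {i : ι} (hbi : b i < α i) : b = 0 := by
  by_contra hb0
  exact (hα b hb hb0 i).not_gt hbi

theorem eq_sub_single_of_sub_sub_one [DecidableEq ι] {α v : ι → ℤ} (hvα : v ≤ α) {i : ι}
    (hi : (α - v - 1) i = 0) (hj : ∀ j, j ≠ i → (α - v - 1) j < 0) :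
    v = α - Pi.single i 1 := by
  funext j
  simp only [Pi.sub_apply, Pi.one_apply] at hi hj
  by_cases hji : j = i
  · subst hji
    simp only [Pi.sub_apply, Pi.single_eq_same]
    omega
  · have hvαj : v j ≤ α j := hvα j
    have hvj := hj j hji
    simp only [Pi.sub_apply, Pi.single_eq_of_ne hji, sub_zero]
    omega

end

theorem stmt3_general (s : ℕ) (S : Set (Fin s → ℤ))
    (β : Fin s → ℤ)
    (α : Fin s → ℤ) (hα : α ∈ S ∧ α ≠ 0 ∧ ∀ x ∈ S, x ≠ 0 → α ≤ x)
    (Δ : (Fin s → ℤ) → Set (Fin s → ℤ))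
    (hΔ : ∀ a, Δ a = {b ∈ S | ∃ i, b i = a i ∧ ∀ j, j ≠ i → a j < b j})
    (K : Set (Fin s → ℤ)) (hK : K = {a | Δ (β - 1 - a) = ∅}) :
    ∀ v : Fin s → ℤ, 0 ≤ v → v ≤ α → (∀ i : Fin s, v ≠ α - Pi.single i 1) →
      β - α + v ∈ K := by
  intro v hv0 hvα hvne
  have hshift : β - 1 - (β - α + v) = α - v - 1 := by abel
  rw [hK, Set.mem_ofPred_eq, hshift, Set.eq_empty_iff_forall_notMem]
  rintro b hb
  rw [hΔ] at hb
  obtain ⟨hbS, i, hbi, hbj⟩ := hb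
  have hb0 : b = 0 := by
    refine eq_zero_of_apply_lt_of_forall_ne_zero_le hα.2.2 hbS (i := i) ?_
    have hv0i : 0 ≤ v i := hv0 i
    simp only [hbi, Pi.sub_apply, Pi.one_apply]
    omega
  subst hb0
  exact hvne i (eq_sub_single_of_sub_sub_one hvα hbi.symm hbj)

/-- For a value semigroup `S ⊆ ℕ^s` with conductor `β` and minimal nonzero
element `α`, every `v` with `0 ≤ v ≤ α` and `v ≠ α - e_i` for all `i`
satisfies `β - α + v ∈ K`. -/
theorem stmt3 (s : ℕ) (hs : 0 < s) (S : Set (Fin s → ℤ))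
    (hnneg : ∀ a ∈ S, 0 ≤ a)
    (h0 : (0 : Fin s → ℤ) ∈ S)
    (hadd : ∀ a ∈ S, ∀ b ∈ S, a + b ∈ S)
    (hmin : ∀ a ∈ S, ∀ b ∈ S, a ⊓ b ∈ S)
    (haxiom : ∀ a ∈ S, ∀ b ∈ S, ∀ i : Fin s, a i = b i →
      ∃ ε ∈ S, a i < ε i ∧ ∀ j, j ≠ i →
        min (a j) (b j) ≤ ε j ∧ (a j ≠ b j → ε j = min (a j) (b j)))
    (β : Fin s → ℤ)
    (hβ : (∀ x, β ≤ x → x ∈ S) ∧ ∀ b, (∀ x, b ≤ x → x ∈ S) → β ≤ b)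
    (α : Fin s → ℤ) (hα : α ∈ S ∧ α ≠ 0 ∧ ∀ x ∈ S, x ≠ 0 → α ≤ x)
    (Δ : (Fin s → ℤ) → Set (Fin s → ℤ))
    (hΔ : ∀ a, Δ a = {b ∈ S | ∃ i, b i = a i ∧ ∀ j, j ≠ i → a j < b j})
    (K : Set (Fin s → ℤ)) (hK : K = {a | Δ (β - 1 - a) = ∅}) :
    ∀ v : Fin s → ℤ, 0 ≤ v → v ≤ α → (∀ i : Fin s, v ≠ α - Pi.single i 1) →
      β - α + v ∈ K :=
  stmt3_general s S β α hα Δ hΔ K hK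
end

section
/- Let S ⊆ ℕ be a numerical semigroup with conductor β, let δ := |ℕ \ S| be its number of gaps, and list the gaps as l₁, …, l_δ. Then the set S* := {0} ∪ { 2β − l_i : 1 ≤ i ≤ δ } ∪ { n ∈ ℕ : n ≥ 2β + 1 } is a numerical semigroup. -/
/-! Every gap `l` of `S` lies below the conductor `β`, so `2β - l ≥ β + 1`; hence the sum of any
two nonzero elements of `S*` is at least `2β + 1`, and `S*` is closed under addition. -/

theorem lt_of_notMem_of_forall_le_mem {S : Set ℕ} {β l : ℕ} (hβ : ∀ n, β ≤ n → n ∈ S)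
    (hl : l ∉ S) : l < β :=
  lt_of_not_ge fun h => hl (hβ l h)

theorem add_mem_zero_union_union_Ici {M : Set ℕ} {c : ℕ} (hM : ∀ m ∈ M, c ≤ 2 * m) :
    ∀ a ∈ {0} ∪ M ∪ Set.Ici c, ∀ b ∈ {0} ∪ M ∪ Set.Ici c, a + b ∈ {0} ∪ M ∪ Set.Ici c := by
  rintro a ((rfl | ha) | ha) b hb
  · simpa using hb
  · rcases hb with (rfl | hb) | hb
    · simpa using Or.inl (Or.inr ha)
    · have := hM a ha
      have := hM b hb
      exact Or.inr (by simp only [Set.mem_Ici]; omega)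
    · exact Or.inr (by simp only [Set.mem_Ici] at hb ⊢; omega)
  · exact Or.inr (by simp only [Set.mem_Ici] at ha ⊢; omega)

theorem stmt4_general (S : Set ℕ)
    (β : ℕ)
    (hβ : (∀ n, β ≤ n → n ∈ S) ∧ ∀ b, (∀ n, b ≤ n → n ∈ S) → β ≤ b)
    (Sstar : Set ℕ)
    (hSstar : Sstar = {0} ∪ {m | ∃ l, l ∉ S ∧ m = 2 * β - l} ∪ {n | 2 * β + 1 ≤ n}) :
    0 ∈ Sstar ∧ (∀ a ∈ Sstar, ∀ b ∈ Sstar, a + b ∈ Sstar) ∧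
      ∃ c, ∀ n, c ≤ n → n ∈ Sstar := by
  subst hSstar
  have hgaps : ∀ m ∈ {m | ∃ l, l ∉ S ∧ m = 2 * β - l}, 2 * β + 1 ≤ 2 * m := by
    rintro _ ⟨l, hl, rfl⟩
    have := lt_of_notMem_of_forall_le_mem hβ.1 hl
    omega
  exact ⟨Or.inl (Or.inl rfl), add_mem_zero_union_union_Ici hgaps, 2 * β + 1, fun _ hn => Or.inr hn⟩

/-- The set `S* = {0} ∪ {2β - l : l ∉ S} ∪ {n : n ≥ 2β + 1}` is a numerical
semigroup, for `S` a numerical semigroup with conductor `β`. -/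
theorem stmt4 (S : Set ℕ)
    (h0 : 0 ∈ S)
    (hadd : ∀ a ∈ S, ∀ b ∈ S, a + b ∈ S)
    (β : ℕ)
    (hβ : (∀ n, β ≤ n → n ∈ S) ∧ ∀ b, (∀ n, b ≤ n → n ∈ S) → β ≤ b)
    (Sstar : Set ℕ)
    (hSstar : Sstar = {0} ∪ {m | ∃ l, l ∉ S ∧ m = 2 * β - l} ∪ {n | 2 * β + 1 ≤ n}) :
    0 ∈ Sstar ∧ (∀ a ∈ Sstar, ∀ b ∈ Sstar, a + b ∈ Sstar) ∧
      ∃ c, ∀ n, c ≤ n → n ∈ Sstar :=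
  stmt4_general S β hβ Sstar hSstar
end

section
/- Let S ⊆ ℕ be a numerical semigroup with conductor β and number of gaps δ, and let S* := {0} ∪ { 2β − l : l ∈ ℕ \ S } ∪ { n ∈ ℕ : n ≥ 2β + 1 }. Then the number of gaps of S* equals δ + 2(β − δ), i.e., |ℕ \ S*| = 2β − δ. -/
/-! Every gap of `S` lies below `β`, so `l ↦ 2β - l` maps the `δ` gaps injectively into
`(0, 2β]`, and the gaps of `S*` are exactly the remaining `2β - δ` points of that interval. -/

namespace Set

theorem compl_zero_union_tsub_image_union_eq_Ioc_diff (N : ℕ) (G : Set ℕ) :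
    ({0} ∪ {m | ∃ l ∈ G, m = N - l} ∪ {n | N + 1 ≤ n})ᶜ = Ioc 0 N \ (N - ·) '' G := by
  ext m
  simp only [mem_compl_iff, mem_union, mem_singleton_iff, mem_ofPred_eq, mem_sdiff, mem_Ioc,
    mem_image, eq_comm (a := m), not_or, not_exists, not_and]
  constructor
  · rintro ⟨⟨hm0, hG⟩, hmN⟩
    exact ⟨by omega, hG⟩
  · rintro ⟨hm, hG⟩
    exact ⟨⟨by omega, hG⟩, by omega⟩

theorem ncard_Ioc_diff_image_tsub {N : ℕ} {G : Set ℕ} (hG : G ⊆ Iio N) :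
    (Ioc 0 N \ (N - ·) '' G).ncard = N - G.ncard := by
  have himage : (N - ·) '' G ⊆ Ioc 0 N := by
    rintro _ ⟨l, hl, rfl⟩
    have : l < N := hG hl
    simp only [mem_Ioc]
    omega
  have hinj : InjOn (N - ·) G := fun a ha b hb hab => by
    have : a < N := hG ha
    have : b < N := hG hb
    simp only at hab
    omega
  rw [ncard_sdiff himage ((finite_Ioc 0 N).subset himage), hinj.ncard_image,
    ncard_Ioc_nat, Nat.sub_zero]

end Set

theorem stmt5_general (S : Set ℕ)
    (β : ℕ)
    (hβ : (∀ n, β ≤ n → n ∈ S) ∧ ∀ b, (∀ n, b ≤ n → n ∈ S) → β ≤ b)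
    (δ : ℕ) (hδ : δ = Sᶜ.ncard)
    (Sstar : Set ℕ)
    (hSstar : Sstar = {0} ∪ {m | ∃ l, l ∉ S ∧ m = 2 * β - l} ∪ {n | 2 * β + 1 ≤ n}) :
    Sstarᶜ.ncard = 2 * β - δ := by
  have hgaps : Sᶜ ⊆ Set.Iio (2 * β) := fun l hl => by
    have : l < β := lt_of_not_ge fun h => hl (hβ.1 l h)
    simp only [Set.mem_Iio]
    omega
  subst hSstar hδ
  exact (congrArg Set.ncard (Set.compl_zero_union_tsub_image_union_eq_Ioc_diff (2 * β) Sᶜ)).trans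
    (Set.ncard_Ioc_diff_image_tsub hgaps)

/-- The number of gaps of `S* = {0} ∪ {2β - l : l ∉ S} ∪ {n ≥ 2β + 1}` is
`2β - δ`, where `δ` is the number of gaps of `S` and `β` its conductor. -/
theorem stmt5 (S : Set ℕ)
    (h0 : 0 ∈ S)
    (hadd : ∀ a ∈ S, ∀ b ∈ S, a + b ∈ S)
    (β : ℕ)
    (hβ : (∀ n, β ≤ n → n ∈ S) ∧ ∀ b, (∀ n, b ≤ n → n ∈ S) → β ≤ b)
    (δ : ℕ) (hδ : δ = Sᶜ.ncard)
    (Sstar : Set ℕ)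
    (hSstar : Sstar = {0} ∪ {m | ∃ l, l ∉ S ∧ m = 2 * β - l} ∪ {n | 2 * β + 1 ≤ n}) :
    Sstarᶜ.ncard = 2 * β - δ :=
  stmt5_general S β hβ δ hδ Sstar hSstar
end

section
/- Let S ⊆ ℕ be a numerical semigroup with conductor β, α := min(S\{0}), and suppose 2α ≤ β. Let d₁, d₂ be natural numbers with d₁ + d₂ = β − 1, d₁ ≤ d₂, and let m be the largest integer with (m+1)α ≤ β. Let q₂ be the largest integer with q₂α ≤ d₁ and set q₁ := m − q₂. Then q₁ ≥ 0, q₂α + d₂ < β, and q₁α + d₁ < β. -/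
/-! Since `2 d₁ < β` and `2 α ≤ β`, we get `d₁ + α < β`; as `q₂ α ≤ d₁`, this gives `(q₂ + 1) α ≤ β`,
so `q₂ ≤ m` by the maximality of `m`. The maximality of `q₂` gives `d₁ < (q₂ + 1) α`, hence
`q₁ α + d₁ < (m + 1) α ≤ β`. -/

theorem lt_add_one_mul_of_forall_mul_le_imp_le {a d q : ℤ}
    (hmax : ∀ q' : ℤ, q' * a ≤ d → q' ≤ q) : d < (q + 1) * a := by
  by_contra! h
  have := hmax (q + 1) h
  omega

theorem stmt17_general
    (β : ℕ)
    (α : ℕ)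
    (h2α : 2 * α ≤ β)
    (d₁ d₂ : ℕ) (hd : d₁ + d₂ + 1 = β) (hd12 : d₁ ≤ d₂)
    (m : ℤ) (hm : (m + 1) * α ≤ (β : ℤ) ∧ ∀ m' : ℤ, (m' + 1) * α ≤ (β : ℤ) → m' ≤ m)
    (q₂ : ℤ) (hq₂ : q₂ * α ≤ (d₁ : ℤ) ∧ ∀ q : ℤ, q * α ≤ (d₁ : ℤ) → q ≤ q₂)
    (q₁ : ℤ) (hq₁ : q₁ = m - q₂) :
    0 ≤ q₁ ∧ q₂ * α + d₂ < (β : ℤ) ∧ q₁ * α + d₁ < (β : ℤ) := by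
  obtain ⟨hmα, hmmax⟩ := hm
  obtain ⟨hq₂α, hq₂max⟩ := hq₂
  have hd₁α : (d₁ : ℤ) + α < β := by omega
  have hq₂m : q₂ ≤ m := hmmax q₂ (by linarith)
  have hd₁_lt : (d₁ : ℤ) < (q₂ + 1) * α := lt_add_one_mul_of_forall_mul_le_imp_le hq₂max
  refine ⟨by omega, by omega, ?_⟩
  calc q₁ * α + d₁ = (m + 1) * α - (q₂ + 1) * α + d₁ := by rw [hq₁]; ring
    _ < (m + 1) * α := by linarith
    _ ≤ β := hmα

/-- Decomposition step in the proof of Theorem 1: with `d₁ + d₂ = β - 1`,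
`d₁ ≤ d₂`, `2α ≤ β`, `m` maximal with `(m+1)α ≤ β` and `q₂` maximal with
`q₂α ≤ d₁`, setting `q₁ := m - q₂` one has `q₁ ≥ 0`, `q₂α + d₂ < β` and
`q₁α + d₁ < β`. -/
theorem stmt17 (S : Set ℕ)
    (h0 : 0 ∈ S)
    (hadd : ∀ a ∈ S, ∀ b ∈ S, a + b ∈ S)
    (β : ℕ)
    (hβ : (∀ n, β ≤ n → n ∈ S) ∧ ∀ b, (∀ n, b ≤ n → n ∈ S) → β ≤ b)
    (α : ℕ) (hα : α ∈ S ∧ α ≠ 0 ∧ ∀ x ∈ S, x ≠ 0 → α ≤ x)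
    (h2α : 2 * α ≤ β)
    (d₁ d₂ : ℕ) (hd : d₁ + d₂ + 1 = β) (hd12 : d₁ ≤ d₂)
    (m : ℤ) (hm : (m + 1) * α ≤ (β : ℤ) ∧ ∀ m' : ℤ, (m' + 1) * α ≤ (β : ℤ) → m' ≤ m)
    (q₂ : ℤ) (hq₂ : q₂ * α ≤ (d₁ : ℤ) ∧ ∀ q : ℤ, q * α ≤ (d₁ : ℤ) → q ≤ q₂)
    (q₁ : ℤ) (hq₁ : q₁ = m - q₂) :
    0 ≤ q₁ ∧ q₂ * α + d₂ < (β : ℤ) ∧ q₁ * α + d₁ < (β : ℤ) :=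
  stmt17_general β α h2α d₁ d₂ hd hd12 m hm q₂ hq₂ q₁ hq₁
end
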